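/- arXiv:2507.17054 — 2 statements merged into one kernel-verified Lean document; each statement's English description precedes it below -/
import Mathlib

section
/- Let lb_i be agent i's lower bound with lb_i equal in both the current node and the frontier node N_F, let LB = lb_i + ∑_{j ≠ i} lb_j^F, and let Δ ≤ Δ_max' = w · ∑_{j ≠ i} lb_j^F − ∑_{j ≠ i} c_j. If the new cost c_i' ≤ w · lb_i + Δ, then the total cost c_i' + ∑_{j ≠ i} c_j ≤ w · LB. (MFD produces a globally bounded-suboptimal node.) -/
theorem mfd_globally_bounded_general (k : ℕ) (w : ℝ) (i : Fin k)
    (c lbF : Fin k → ℝ) (lb_i c_i' Δ LB : ℝ)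
    (hLB : LB = lb_i + ∑ j ∈ Finset.univ.erase i, lbF j)
    (hΔ : Δ ≤ w * (∑ j ∈ Finset.univ.erase i, lbF j) - ∑ j ∈ Finset.univ.erase i, c j)
    (hc : c_i' ≤ w * lb_i + Δ) :
    c_i' + ∑ j ∈ Finset.univ.erase i, c j ≤ w * LB := by
  subst hLB
  calc c_i' + ∑ j ∈ Finset.univ.erase i, c j
      ≤ w * lb_i + Δ + ∑ j ∈ Finset.univ.erase i, c j := by gcongr
    _ ≤ w * (lb_i + ∑ j ∈ Finset.univ.erase i, lbF j) := by linarith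

theorem mfd_globally_bounded (k : ℕ) (w : ℝ) (hw : 1 ≤ w) (i : Fin k)
    (c lbF : Fin k → ℝ) (lb_i c_i' Δ LB : ℝ)
    (hLB : LB = lb_i + ∑ j ∈ Finset.univ.erase i, lbF j)
    (hΔ : Δ ≤ w * (∑ j ∈ Finset.univ.erase i, lbF j) - ∑ j ∈ Finset.univ.erase i, c j)
    (hc : c_i' ≤ w * lb_i + Δ) :
    c_i' + ∑ j ∈ Finset.univ.erase i, c j ≤ w * LB :=
  mfd_globally_bounded_general k w i c lbF lb_i c_i' Δ LB hLB hΔ hc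
end

section
/- Monotonicity of the flex pool: if an agent's path is replanned so that its cost increases by at most its distributed flex plus w times the increase of its lower bound (c_i' ≤ c_i + Δ + w·(lb_i' − lb_i) with Δ ≤ Δ_max), then the new maximum allowed flex for any other agent m, Δ_max,m' = ∑_{j≠m}(w·lb_j' − c_j'), satisfies Δ_max,m' ≥ ∑_{j≠m}(w·lb_j − c_j) − Δ when only agent i's cost and lower bound change and m ≠ i. -/
/-! Only agent `i`'s summand changes, and the bound on `c' i` is exactly the statement that its
slack `w * lb - c` drops by at most `Δ`: the `w * (lb' i - lb i)` terms cancel. -/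

open Finset

theorem Finset.sum_sub_sum_eq_of_eqOn_erase {ι M : Type*} [AddCommGroup M] [DecidableEq ι]
    {s : Finset ι} {i : ι} (hi : i ∈ s) {f g : ι → M} (hfg : Set.EqOn f g ↑(s.erase i)) :
    ∑ j ∈ s, g j - ∑ j ∈ s, f j = g i - f i := by
  rw [← add_sum_erase s f hi, ← add_sum_erase s g hi, sum_congr rfl fun j hj => hfg hj]
  abel

theorem flex_pool_monotone_general (k : ℕ) (w : ℝ) (i m : Fin k)
    (him : i ≠ m)
    (c lb c' lb' : Fin k → ℝ) (Δ : ℝ)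
    (hci : c' i ≤ c i + Δ + w * (lb' i - lb i))
    (hother : ∀ j, j ≠ i → c' j = c j ∧ lb' j = lb j) :
    (∑ j ∈ Finset.univ.erase m, (w * lb j - c j)) - Δ ≤
      ∑ j ∈ Finset.univ.erase m, (w * lb' j - c' j) := by
  have hi : i ∈ univ.erase m := mem_erase.2 ⟨him, mem_univ i⟩
  have hsame : Set.EqOn (fun j => w * lb j - c j) (fun j => w * lb' j - c' j)
      ↑((univ.erase m).erase i) := fun j hj => by
    obtain ⟨hc, hlb⟩ := hother j (mem_erase.1 hj).1
    simp only [hc, hlb]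
  have hchange := sum_sub_sum_eq_of_eqOn_erase hi hsame
  linarith

theorem flex_pool_monotone (k : ℕ) (w : ℝ) (hw : 1 ≤ w) (i m : Fin k)
    (him : i ≠ m)
    (c lb c' lb' : Fin k → ℝ) (Δ : ℝ)
    (hlbi : lb i ≤ lb' i)
    (hci : c' i ≤ c i + Δ + w * (lb' i - lb i))
    (hother : ∀ j, j ≠ i → c' j = c j ∧ lb' j = lb j) :
    (∑ j ∈ Finset.univ.erase m, (w * lb j - c j)) - Δ ≤
      ∑ j ∈ Finset.univ.erase m, (w * lb' j - c' j) :=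
  flex_pool_monotone_general k w i m him c lb c' lb' Δ hci hother
end
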